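/- Let G be a graph of order n with a dominating vertex w, and let x be a unit eigenvector of Q(G) for q(G). If q(G) > n + 2k − 3 with k ≥ 2, then the entry x_w satisfies x_w² ≤ (n−1)/((q(G) − n + 1)² + n − 1) ≤ (n−1)/(n − 1 + 4(k−1)²). -/

import Mathlib

/-! The eigen-equation of `Q(G)` at a vertex `w` adjacent to all others reads
`(q - (n - 1)) x_w = ∑_{i ≠ w} x_i`. By Cauchy–Schwarz the square of the right-hand side is at
most `(n - 1) ∑_{i ≠ w} x_i² = (n - 1)(1 - x_w²)`, which solves to the first bound; the second
follows from `q - n + 1 > 2(k - 1) > 0`. -/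

open Finset

def Snk (n k : ℕ) : SimpleGraph (Fin n) where
  Adj i j := i ≠ j ∧ (i.val < k ∨ j.val < k)
  symm := ⟨fun i j h => ⟨h.1.symm, h.2.symm⟩⟩
  loopless := ⟨fun i h => h.1 rfl⟩

instance SnkDec (n k : ℕ) : DecidableRel (Snk n k).Adj :=
  fun i j => inferInstanceAs (Decidable (i ≠ j ∧ (i.val < k ∨ j.val < k)))

def signlessLaplacian {n : ℕ} (G : SimpleGraph (Fin n)) [DecidableRel G.Adj] :
    Matrix (Fin n) (Fin n) ℝ :=
  Matrix.diagonal (fun i => (G.degree i : ℝ)) + G.adjMatrix ℝ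

noncomputable def qIndex {n : ℕ} (G : SimpleGraph (Fin n)) [DecidableRel G.Adj] : ℝ :=
  sSup (spectrum ℝ (signlessLaplacian G))

def HasPathOn {V : Type*} (G : SimpleGraph V) (m : ℕ) : Prop :=
  ∃ f : Fin m → V, Function.Injective f ∧
    ∀ (i : ℕ) (h : i + 1 < m), G.Adj (f ⟨i, by omega⟩) (f ⟨i + 1, h⟩)

def HasCycleOn {V : Type*} (G : SimpleGraph V) (m : ℕ) : Prop :=
  ∃ f : ZMod m → V, Function.Injective f ∧ ∀ i, G.Adj (f i) (f (i + 1))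

lemma signlessLaplacian_mulVec_apply {n : ℕ} (G : SimpleGraph (Fin n)) [DecidableRel G.Adj]
    (x : Fin n → ℝ) (v : Fin n) :
    (signlessLaplacian G).mulVec x v = G.degree v * x v + ∑ u ∈ G.neighborFinset v, x u := by
  rw [signlessLaplacian, Matrix.add_mulVec, Pi.add_apply, Matrix.mulVec_diagonal,
    SimpleGraph.adjMatrix_mulVec_apply]

lemma signlessLaplacian_eigen_eq_of_isUniversal {n : ℕ} (G : SimpleGraph (Fin n))
    [DecidableRel G.Adj] {w : Fin n} (hw : G.IsUniversal w) {x : Fin n → ℝ} {q : ℝ}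
    (heig : (signlessLaplacian G).mulVec x = q • x) :
    (q - ((n : ℝ) - 1)) * x w = ∑ i ∈ univ.erase w, x i := by
  have hdeg : (G.degree w : ℝ) = (n : ℝ) - 1 := by
    rw [(G.degree_eq_card_sub_one w).mpr hw, Fintype.card_fin, Nat.cast_pred w.pos]
  have h := congrFun heig w
  rw [signlessLaplacian_mulVec_apply, (G.neighborFinset_eq_erase_univ w).mpr hw, hdeg,
    Pi.smul_apply, smul_eq_mul] at h
  linarith

lemma sq_le_of_mul_eq_sum_erase {ι : Type*} [Fintype ι] [DecidableEq ι] {x : ι → ℝ}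
    (hunit : ∑ i, x i ^ 2 = 1) {w : ι} {c : ℝ} (hc : c ≠ 0)
    (h : c * x w = ∑ i ∈ univ.erase w, x i) :
    x w ^ 2 ≤ ((Fintype.card ι : ℝ) - 1) / (c ^ 2 + ((Fintype.card ι : ℝ) - 1)) := by
  have hcard : (#(univ.erase w) : ℝ) = (Fintype.card ι : ℝ) - 1 := by
    rw [card_erase_of_mem (mem_univ w), card_univ,
      Nat.cast_pred (Fintype.card_pos_iff.mpr ⟨w⟩)]
  have hcs : (c * x w) ^ 2 ≤ ((Fintype.card ι : ℝ) - 1) * (1 - x w ^ 2) := by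
    have hrest : 1 - x w ^ 2 = ∑ i ∈ univ.erase w, x i ^ 2 := by
      rw [← hunit, ← add_sum_erase _ _ (mem_univ w), add_sub_cancel_left]
    rw [h, hrest, ← hcard]
    exact sq_sum_le_card_mul_sum_sq
  have hm : (0 : ℝ) ≤ (Fintype.card ι : ℝ) - 1 := by rw [← hcard]; positivity
  rw [le_div_iff₀ (add_pos_of_pos_of_nonneg ((pow_two_pos_of_ne_zero hc)) hm)]
  nlinarith [hcs]

lemma div_sq_add_le_div_add_sq {m s t : ℝ} (hm : 0 ≤ m) (hs : 0 < s) (hst : s ≤ t) :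
    m / (t ^ 2 + m) ≤ m / (m + s ^ 2) :=
  div_le_div_of_nonneg_left hm (by positivity) (by nlinarith)

theorem stmt16 {n k : ℕ} (hk : 2 ≤ k) (G : SimpleGraph (Fin n)) [DecidableRel G.Adj]
    (w : Fin n) (hdom : ∀ v, v ≠ w → G.Adj w v) (x : Fin n → ℝ)
    (hunit : ∑ i, x i ^ 2 = 1)
    (heig : (signlessLaplacian G).mulVec x = qIndex G • x)
    (hq : (n : ℝ) + 2 * k - 3 < qIndex G) :
    x w ^ 2 ≤ ((n : ℝ) - 1) / ((qIndex G - n + 1) ^ 2 + ((n : ℝ) - 1)) ∧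
      ((n : ℝ) - 1) / ((qIndex G - n + 1) ^ 2 + ((n : ℝ) - 1)) ≤
        ((n : ℝ) - 1) / ((n : ℝ) - 1 + 4 * ((k : ℝ) - 1) ^ 2) := by
  have hk' : (0 : ℝ) < 2 * ((k : ℝ) - 1) := by
    have : (2 : ℝ) ≤ k := by exact_mod_cast hk
    linarith
  have hgap : 2 * ((k : ℝ) - 1) < qIndex G - n + 1 := by linarith
  have heq := signlessLaplacian_eigen_eq_of_isUniversal G (fun v hv => hdom v hv.symm) heig
  rw [show qIndex G - ((n : ℝ) - 1) = qIndex G - n + 1 by ring] at heq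
  constructor
  · simpa only [Fintype.card_fin] using sq_le_of_mul_eq_sum_erase hunit (hk'.trans hgap).ne' heq
  · have hm : (0 : ℝ) ≤ (n : ℝ) - 1 := by
      have : (1 : ℝ) ≤ n := by exact_mod_cast w.pos
      linarith
    simpa only [mul_pow, show (2 : ℝ) ^ 2 = 4 by norm_num] using
      div_sq_add_le_div_add_sq hm hk' hgap.le
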